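/- arXiv:1905.05519 — 2 statements merged into one kernel-verified Lean document; each statement's English description precedes it below -/
import Mathlib

section
/- Let T be a monad on Type, ρ : T ∘ F ⟹ F ∘ T a natural transformation, (X, χ) a T-algebra carrying a T-automaton structure δ : X → O × (A → X), and g : G → X a set of generators with a chosen right inverse s : X → T G of g^♯. Define γ := (Prod.map id (s ∘ ·)) ∘ δ ∘ g : G → O × (A → T G). Then g^♯ : T G → X is a homomorphism of deterministic automata from (T G, γ^♯) to (X, δ), i.e., δ ∘ g^♯ = (Prod.map id (g^♯ ∘ ·)) ∘ γ^♯. -/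
/-!
Since `g^♯ = χ ∘ T g` is a morphism of `T`-algebras out of the free algebra `(T G, μ_G)`, the
automaton law for `δ` together with naturality of `ρ` pushes `δ ∘ g^♯` through `T` down to
`δ ∘ g`. There the right inverse `s` lets `δ ∘ g` be rewritten as `F(g^♯) ∘ γ`, and reversing the
same steps produces `F(g^♯) ∘ γ^♯`.
-/

open CategoryTheory

universe u

/-- `h^♯ = F μ_Y ∘ ρ_{T Y} ∘ T h`, where `F X = O × (A → X)`. -/
def freeExtAut {T : Monad (Type u)} {A O : Type u}
    (ρ : ∀ X : Type u, T.toFunctor.obj (O × (A → X)) → O × (A → T.toFunctor.obj X))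
    {Y : Type u} (h : Y → O × (A → T.toFunctor.obj Y)) :
    T.toFunctor.obj Y → O × (A → T.toFunctor.obj Y) :=
  Prod.map (id : O → O)
      (fun k : A → T.toFunctor.obj (T.toFunctor.obj Y) => T.μ.app Y ∘ k)
    ∘ ρ (T.toFunctor.obj Y) ∘ T.toFunctor.map (TypeCat.ofHom h)

/-- The functor `F X = O × (A → X)` on maps. -/
def automatonMap (A O : Type u) {Y Z : Type u} (f : Y → Z) : O × (A → Y) → O × (A → Z) :=
  Prod.map (id : O → O) (fun k : A → Y => f ∘ k)

def IsAutomatonHom {A O Y Z : Type u} (α : Y → O × (A → Y)) (β : Z → O × (A → Z))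
    (f : Y → Z) : Prop :=
  β ∘ f = automatonMap A O f ∘ α

namespace CategoryTheory.Monad

variable (T : Monad (Type u))

theorem map_ofHom_comp {X Y Z : Type u} (f : X → Y) (h : Y → Z) :
    T.map (↾(h ∘ f)) = T.map (↾h) ∘ T.map (↾f) := by
  rw [show ↾(h ∘ f) = ↾f ≫ ↾h from rfl, Functor.map_comp]
  rfl

theorem map_ofHom_comp_mu {X Y : Type u} (f : X → Y) :
    T.map (↾f) ∘ T.μ.app X = T.μ.app Y ∘ T.map (↾(T.map (↾f))) :=
  funext fun x => congrArg (fun k => k x) (T.μ.naturality (↾f)).symm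

end CategoryTheory.Monad

theorem freeExt_comp_mu {T : Monad (Type u)} {X G : Type u} {χ : T.obj X → X}
    (hassoc : χ ∘ T.μ.app X = χ ∘ T.map (↾χ)) (g : G → X) :
    (χ ∘ T.map (↾g)) ∘ T.μ.app G = χ ∘ T.map (↾(χ ∘ T.map (↾g))) := by
  calc (χ ∘ T.map (↾g)) ∘ T.μ.app G
      = (χ ∘ T.μ.app X) ∘ T.map (↾(T.map (↾g))) := by
        rw [Function.comp_assoc, T.map_ofHom_comp_mu]; rfl
    _ = χ ∘ T.map (↾(χ ∘ T.map (↾g))) := by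
        rw [hassoc, T.map_ofHom_comp (T.map (↾g)) χ]; rfl

theorem isAutomatonHom_freeExt {T : Monad (Type u)} {A O : Type u}
    {ρ : ∀ X : Type u, T.obj (O × (A → X)) → O × (A → T.obj X)}
    (hρnat : ∀ (X Y : Type u) (f : X → Y),
      ρ Y ∘ T.map (↾(automatonMap A O f)) = automatonMap A O (T.map (↾f)) ∘ ρ X)
    {X : Type u} {χ : T.obj X → X} (hassoc : χ ∘ T.μ.app X = χ ∘ T.map (↾χ))
    {δ : X → O × (A → X)} (hδ : δ ∘ χ = automatonMap A O χ ∘ ρ X ∘ T.map (↾δ))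
    {G : Type u} (g : G → X) (γ : G → O × (A → T.obj G))
    (hγ : automatonMap A O (χ ∘ T.map (↾g)) ∘ γ = δ ∘ g) :
    IsAutomatonHom (freeExtAut ρ γ) δ (χ ∘ T.map (↾g)) := by
  set gsharp := χ ∘ T.map (↾g)
  calc δ ∘ gsharp
      = automatonMap A O χ ∘ ρ X ∘ T.map (↾(δ ∘ g)) := by
        change (δ ∘ χ) ∘ T.map (↾g) = _
        rw [hδ, T.map_ofHom_comp g δ]; rfl
    _ = automatonMap A O χ ∘ (ρ X ∘ T.map (↾(automatonMap A O gsharp))) ∘ T.map (↾γ) := by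
        rw [← hγ, T.map_ofHom_comp γ (automatonMap A O gsharp)]; rfl
    _ = automatonMap A O (χ ∘ T.map (↾gsharp)) ∘ ρ (T.obj G) ∘ T.map (↾γ) := by
        rw [hρnat]; rfl
    _ = automatonMap A O gsharp ∘ freeExtAut ρ γ := by
        rw [← freeExt_comp_mu hassoc g]; rfl

theorem gsharp_automaton_hom_general
    (T : Monad (Type u)) (A O : Type u)
    (ρ : ∀ X : Type u, T.toFunctor.obj (O × (A → X)) → O × (A → T.toFunctor.obj X))
    (hρnat : ∀ (X Y : Type u) (f : X → Y),
      ρ Y ∘ T.toFunctor.map (TypeCat.ofHom (Prod.map (id : O → O) (fun k : A → X => f ∘ k)))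
        = Prod.map (id : O → O)
            (fun k : A → T.toFunctor.obj X => T.toFunctor.map (TypeCat.ofHom f) ∘ k) ∘ ρ X)
    (X : Type u) (χ : T.toFunctor.obj X → X)
    (hassoc : χ ∘ T.μ.app X = χ ∘ T.toFunctor.map (TypeCat.ofHom χ))
    (δ : X → O × (A → X))
    (hδ : δ ∘ χ
      = Prod.map (id : O → O) (fun k : A → T.toFunctor.obj X => χ ∘ k)
          ∘ ρ X ∘ T.toFunctor.map (TypeCat.ofHom δ))
    (G : Type u) (g : G → X) (s : X → T.toFunctor.obj G)
    (hs : (χ ∘ T.toFunctor.map (TypeCat.ofHom g)) ∘ s = id) :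
    δ ∘ (χ ∘ T.toFunctor.map (TypeCat.ofHom g))
      = Prod.map (id : O → O)
            (fun k : A → T.toFunctor.obj G => (χ ∘ T.toFunctor.map (TypeCat.ofHom g)) ∘ k)
          ∘ freeExtAut ρ (Prod.map (id : O → O) (fun k : A → X => s ∘ k) ∘ δ ∘ g) := by
  refine isAutomatonHom_freeExt hρnat hassoc hδ g _ ?_
  change automatonMap A O ((χ ∘ T.map (↾g)) ∘ s) ∘ δ ∘ g = δ ∘ g
  rw [hs]
  rfl

/-- in the situation of the free representation, `g^♯ = χ ∘ T g : T G → X`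
is a homomorphism of deterministic automata from `(T G, γ^♯)` to `(X, δ)`, i.e.
`δ ∘ g^♯ = F(g^♯) ∘ γ^♯` where `γ = F s ∘ δ ∘ g`. -/
theorem gsharp_automaton_hom
    (T : Monad (Type u)) (A O : Type u)
    (ρ : ∀ X : Type u, T.toFunctor.obj (O × (A → X)) → O × (A → T.toFunctor.obj X))
    (hρnat : ∀ (X Y : Type u) (f : X → Y),
      ρ Y ∘ T.toFunctor.map (TypeCat.ofHom (Prod.map (id : O → O) (fun k : A → X => f ∘ k)))
        = Prod.map (id : O → O)
            (fun k : A → T.toFunctor.obj X => T.toFunctor.map (TypeCat.ofHom f) ∘ k) ∘ ρ X)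
    (X : Type u) (χ : T.toFunctor.obj X → X)
    (hunit : χ ∘ T.η.app X = id)
    (hassoc : χ ∘ T.μ.app X = χ ∘ T.toFunctor.map (TypeCat.ofHom χ))
    (δ : X → O × (A → X))
    (hδ : δ ∘ χ
      = Prod.map (id : O → O) (fun k : A → T.toFunctor.obj X => χ ∘ k)
          ∘ ρ X ∘ T.toFunctor.map (TypeCat.ofHom δ))
    (G : Type u) (g : G → X) (s : X → T.toFunctor.obj G)
    (hs : (χ ∘ T.toFunctor.map (TypeCat.ofHom g)) ∘ s = id) :
    δ ∘ (χ ∘ T.toFunctor.map (TypeCat.ofHom g))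
      = Prod.map (id : O → O)
            (fun k : A → T.toFunctor.obj G => (χ ∘ T.toFunctor.map (TypeCat.ofHom g)) ∘ k)
          ∘ freeExtAut ρ (Prod.map (id : O → O) (fun k : A → X => s ∘ k) ∘ δ ∘ g) :=
  gsharp_automaton_hom_general T A O ρ hρnat X χ hassoc δ hδ G g s hs
end

section
/- Let T be a monad on Type, ρ : T ∘ F ⟹ F ∘ T a natural transformation satisfying the unit law ρ_X ∘ η_{F X} = F(η_X) for all X, and (R, δ) a deterministic automaton with R finite. Let δ̂ := ((Prod.map id (η_R ∘ ·)) ∘ δ)^♯ : T R → O × (A → T R) be the determinization and L := l_{T R} : T R → (List A → O) its language map. Suppose (M, b) is a T-algebra, e : T R → M is a surjective T-algebra homomorphism, and m : M → (List A → O) is an injective function with m ∘ e = L. Suppose P is a predicate on R defining the subtype G = {x : R // P x} with inclusion ι : G → R, such that g := e ∘ η_R ∘ ι : G → M is a minimal set of generators for (M, b). Then the map G → (List A → O) sending r to l_R(ι r) is injective; consequently card G ≤ card {l_R(x) | x ∈ R}, i.e., the T-succinct automaton on G is at least as small as the minimal deterministic automaton equivalent to (R, δ). -/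
/-!
The unit law of `ρ` makes `η_R` a morphism of automata from `(R, δ)` into the determinization,
so `x` and `η_R x` accept the same language `l_R x`. Hence two generators with the same language
have the same image under `m ∘ e`, so equal images in `M` as `m` is injective; by the unit law of
the algebra `b`, the singleton `η` of one of them then witnesses that the other is redundant.
-/

open CategoryTheory

universe u

/-- The language map of a deterministic automaton `(X, δ)` with outputs in `O`. -/
def detLang {A O X : Type u} (δ : X → O × (A → X)) : X → List A → O
  | x, [] => (δ x).1
  | x, a :: w => detLang δ ((δ x).2 a) w

/-- `g : G → X` is a set of generators for the `T`-algebra `(X, χ)`. -/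
def IsGeneratorSet (T : Monad (Type u)) {G X : Type u}
    (χ : T.toFunctor.obj X → X) (g : G → X) : Prop :=
  ∃ s : X → T.toFunctor.obj G, (χ ∘ T.toFunctor.map (TypeCat.ofHom g)) ∘ s = id

/-- `r : G` is redundant with respect to `g : G → X`. -/
def Redundant (T : Monad (Type u)) {G X : Type u}
    (χ : T.toFunctor.obj X → X) (g : G → X) (r : G) : Prop :=
  ∃ U : T.toFunctor.obj {x : G // x ≠ r},
    χ (T.toFunctor.map (TypeCat.ofHom (fun u : {x : G // x ≠ r} => g u.val)) U) = g r


namespace CategoryTheory.Monad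

variable (T : Monad (Type u))

theorem map_eta_apply {X Y : Type u} (f : X → Y) (x : X) :
    T.toFunctor.map (TypeCat.ofHom f) (T.η.app X x) = T.η.app Y (f x) :=
  (NatTrans.naturality_apply T.η (TypeCat.ofHom f) x).symm

theorem mu_eta_apply {X : Type u} (t : T.toFunctor.obj X) :
    T.μ.app X (T.η.app (T.toFunctor.obj X) t) = t :=
  ConcreteCategory.congr_hom (T.left_unit X) t

end CategoryTheory.Monad

section Automata

variable {A O : Type u}

theorem detLang_apply_eq_of_morphism {X Y : Type u} {δX : X → O × (A → X)}
    {δY : Y → O × (A → Y)} {f : X → Y}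
    (hf : ∀ x, δY (f x) = ((δX x).1, f ∘ (δX x).2)) (x : X) :
    detLang δY (f x) = detLang δX x := by
  funext w
  induction w generalizing x with
  | nil => simp [detLang, hf]
  | cons a w ih => simp [detLang, hf, ih]

theorem freeExtAut_eta_apply {T : Monad (Type u)}
    {ρ : ∀ X : Type u, T.toFunctor.obj (O × (A → X)) → O × (A → T.toFunctor.obj X)}
    (hρunit : ∀ X : Type u,
      ρ X ∘ T.η.app (O × (A → X)) = Prod.map (id : O → O) (fun k : A → X => T.η.app X ∘ k))
    {Y : Type u} (h : Y → O × (A → T.toFunctor.obj Y)) (y : Y) :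
    freeExtAut ρ h (T.η.app Y y) = h y := by
  have hunit := congrFun (hρunit (T.toFunctor.obj Y)) (h y)
  simp only [Function.comp_apply] at hunit
  ext a
  · simp [freeExtAut, T.map_eta_apply, hunit]
  · simp [freeExtAut, T.map_eta_apply, hunit, T.mu_eta_apply]

theorem detLang_freeExtAut_eta_apply {T : Monad (Type u)}
    {ρ : ∀ X : Type u, T.toFunctor.obj (O × (A → X)) → O × (A → T.toFunctor.obj X)}
    (hρunit : ∀ X : Type u,
      ρ X ∘ T.η.app (O × (A → X)) = Prod.map (id : O → O) (fun k : A → X => T.η.app X ∘ k))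
    {R : Type u} (δ : R → O × (A → R)) (x : R) :
    detLang (freeExtAut ρ (Prod.map (id : O → O) (fun k : A → R => T.η.app R ∘ k) ∘ δ))
      (T.η.app R x) = detLang δ x :=
  detLang_apply_eq_of_morphism (fun x => freeExtAut_eta_apply hρunit _ x) x

end Automata

theorem injective_of_forall_not_redundant {T : Monad (Type u)} {G X : Type u}
    {χ : T.toFunctor.obj X → X} (hχunit : χ ∘ T.η.app X = id) {g : G → X}
    (hmin : ∀ r, ¬ Redundant T χ g r) : Function.Injective g := by
  intro r s hrs
  by_contra hne
  refine hmin r ⟨T.η.app _ ⟨s, Ne.symm hne⟩, ?_⟩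
  rw [T.map_eta_apply]
  exact (congrFun hχunit _).trans hrs.symm

theorem succinct_at_most_minimal_dfa_general
    (T : Monad (Type u)) (A O : Type u)
    (ρ : ∀ X : Type u, T.toFunctor.obj (O × (A → X)) → O × (A → T.toFunctor.obj X))
    (hρunit : ∀ X : Type u,
      ρ X ∘ T.η.app (O × (A → X))
        = Prod.map (id : O → O) (fun k : A → X => T.η.app X ∘ k))
    (R : Type u) (hR : Finite R) (δ : R → O × (A → R))
    (M : Type u) (b : T.toFunctor.obj M → M)
    (hbunit : b ∘ T.η.app M = id)
    (e : T.toFunctor.obj R → M)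
    (m : M → List A → O) (hminj : Function.Injective m)
    (hme : m ∘ e
      = detLang (freeExtAut ρ (Prod.map (id : O → O) (fun k : A → R => T.η.app R ∘ k) ∘ δ)))
    (P : R → Prop)
    (hmin : ∀ r : {x : R // P x},
      ¬ Redundant T b (fun r : {x : R // P x} => e (T.η.app R r.val)) r) :
    Function.Injective (fun r : {x : R // P x} => detLang δ r.val)
    ∧ Nat.card {x : R // P x} ≤ Nat.card (Set.range (detLang δ)) := by
  have hgen_inj : Function.Injective (fun r : {x : R // P x} => e (T.η.app R r.val)) :=
    injective_of_forall_not_redundant hbunit hmin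
  have hlang : ∀ x, m (e (T.η.app R x)) = detLang δ x := fun x =>
    (congrFun hme _).trans (detLang_freeExtAut_eta_apply hρunit δ x)
  have hinj : Function.Injective (fun r : {x : R // P x} => detLang δ r.val) := by
    simpa only [Function.comp_def, hlang] using hminj.comp hgen_inj
  refine ⟨hinj, Nat.card_le_card_of_injective (fun r => ⟨_, r.val, rfl⟩) ?_⟩
  exact fun r s hrs => hinj (congrArg Subtype.val hrs)

/-- with `(R, δ)` a finite deterministic automaton, `δ̂` its determinization
with language map `L = l_{T R}`, `(M, b)` a `T`-algebra, `e : T R → M` a surjective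
`T`-algebra homomorphism, `m : M → (List A → O)` injective with `m ∘ e = L`, and a
subtype `G ⊆ R` such that `g = e ∘ η_R ∘ ι` is a minimal set of generators for `(M, b)`,
the map `G → (List A → O)`, `r ↦ l_R(ι r)` is injective; consequently
`card G ≤ card {l_R x | x ∈ R}`: the `T`-succinct automaton on `G` is at least as small
as the minimal deterministic automaton equivalent to `(R, δ)`. -/
theorem succinct_at_most_minimal_dfa
    (T : Monad (Type u)) (A O : Type u)
    (ρ : ∀ X : Type u, T.toFunctor.obj (O × (A → X)) → O × (A → T.toFunctor.obj X))
    (hρnat : ∀ (X Y : Type u) (f : X → Y),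
      ρ Y ∘ T.toFunctor.map (TypeCat.ofHom (Prod.map (id : O → O) (fun k : A → X => f ∘ k)))
        = Prod.map (id : O → O)
            (fun k : A → T.toFunctor.obj X => T.toFunctor.map (TypeCat.ofHom f) ∘ k) ∘ ρ X)
    (hρunit : ∀ X : Type u,
      ρ X ∘ T.η.app (O × (A → X))
        = Prod.map (id : O → O) (fun k : A → X => T.η.app X ∘ k))
    (R : Type u) (hR : Finite R) (δ : R → O × (A → R))
    (M : Type u) (b : T.toFunctor.obj M → M)
    (hbunit : b ∘ T.η.app M = id)
    (hbassoc : b ∘ T.μ.app M = b ∘ T.toFunctor.map (TypeCat.ofHom b))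
    (e : T.toFunctor.obj R → M) (hesurj : Function.Surjective e)
    (hehom : e ∘ T.μ.app R = b ∘ T.toFunctor.map (TypeCat.ofHom e))
    (m : M → List A → O) (hminj : Function.Injective m)
    (hme : m ∘ e
      = detLang (freeExtAut ρ (Prod.map (id : O → O) (fun k : A → R => T.η.app R ∘ k) ∘ δ)))
    (P : R → Prop)
    (hgen : IsGeneratorSet T b
      (fun r : {x : R // P x} => e (T.η.app R r.val)))
    (hmin : ∀ r : {x : R // P x},
      ¬ Redundant T b (fun r : {x : R // P x} => e (T.η.app R r.val)) r) :
    Function.Injective (fun r : {x : R // P x} => detLang δ r.val)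
    ∧ Nat.card {x : R // P x} ≤ Nat.card (Set.range (detLang δ)) :=
  succinct_at_most_minimal_dfa_general T A O ρ hρunit R hR δ M b hbunit e m hminj hme P hmin
end
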